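/- arXiv:2605.00248 — 2 statements merged into one kernel-verified Lean document; each statement's English description precedes it below -/
import Mathlib

section
/- In the pollution game with C countries where country c has utility U_c(q_c, q_{-c}) = A_c q_c - B_c q_c^2 - D_c Q_W^2 with Q_W = sum_c q_c, B_c > 0, D_c ≥ 0, if each country plays a best response (the strategy profile is a Nash equilibrium), then the total pollution is Q_W = ( (1/2) * sum_c (A_c/B_c) ) / ( 1 + sum_c (D_c/B_c) ). -/
open Finset

/-- Country `c`'s utility in the pollution game. -/
def pollutionUtility {C : ℕ} (A B D : Fin C → ℝ) (c : Fin C) (q : Fin C → ℝ) : ℝ :=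
  A c * q c - B c * (q c) ^ 2 - D c * (∑ j, q j) ^ 2

/-- `q` is a Nash equilibrium: no unilateral deviation improves a country's utility. -/
def IsNash {C : ℕ} (A B D : Fin C → ℝ) (q : Fin C → ℝ) : Prop :=
  ∀ c : Fin C, ∀ x : ℝ,
    pollutionUtility A B D c (Function.update q c x) ≤ pollutionUtility A B D c q

/-!
At a Nash equilibrium country `c`'s utility, as a function of its own emission, attains its
maximum at `q c`, so by Fermat's rule its derivative vanishes there:
`A c - 2 B c q c - 2 D c Q = 0` with `Q = ∑ j, q j`. Dividing by `B c` and summing over `c` gives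
`Q = (1/2) ∑ A c / B c - Q ∑ D c / B c`, a linear equation whose coefficient
`1 + ∑ D c / B c` is positive.
-/

theorem Finset.sum_univ_update_eq_add_sub {ι M : Type*} [Fintype ι] [DecidableEq ι]
    [AddCommGroup M] (f : ι → M) (i : ι) (b : M) :
    ∑ j, Function.update f i b j = ∑ j, f j + (b - f i) := by
  rw [sum_update_of_mem (mem_univ i), ← sum_erase_add univ f (mem_univ i),
    sdiff_singleton_eq_erase]
  abel

section PollutionGame

variable {C : ℕ} {A B D : Fin C → ℝ}

theorem hasDerivAt_pollutionUtility_update (A B D : Fin C → ℝ) (c : Fin C) (q : Fin C → ℝ)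
    (x : ℝ) :
    HasDerivAt (fun y ↦ pollutionUtility A B D c (Function.update q c y))
      (A c - 2 * B c * x - 2 * D c * (∑ j, q j + (x - q c))) x := by
  simp only [pollutionUtility, Function.update_self, sum_univ_update_eq_add_sub]
  have hx := hasDerivAt_id' x
  exact (((hx.const_mul (A c)).sub ((hx.pow 2).const_mul (B c))).sub
    ((((hx.sub_const (q c)).const_add (∑ j, q j)).pow 2).const_mul (D c))).congr_deriv (by ring)

theorem IsNash.marginalUtility_eq_zero {q : Fin C → ℝ} (hq : IsNash A B D q) (c : Fin C) :
    A c - 2 * B c * q c - 2 * D c * ∑ j, q j = 0 := by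
  have hmax : IsMaxOn (fun y ↦ pollutionUtility A B D c (Function.update q c y)) Set.univ (q c) :=
    isMaxOn_univ_iff.2 fun x ↦ by simpa only [Function.update_eq_self] using hq c x
  simpa only [sub_self, add_zero] using (hmax.isLocalMax Filter.univ_mem).hasDerivAt_eq_zero
    (hasDerivAt_pollutionUtility_update A B D c q (q c))

theorem IsNash.eq_bestResponse {q : Fin C → ℝ} (hq : IsNash A B D q) {c : Fin C}
    (hc : B c ≠ 0) :
    q c = A c / B c / 2 - D c / B c * ∑ j, q j := by
  have := hq.marginalUtility_eq_zero c
  field_simp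
  linarith

end PollutionGame

theorem pollution_total_at_nash_general {C : ℕ}
    (A B D : Fin C → ℝ) (hB : ∀ c, 0 < B c) (hD : ∀ c, 0 ≤ D c)
    (q : Fin C → ℝ) (hq : IsNash A B D q) :
    (∑ c, q c) = ((1 / 2) * ∑ c, A c / B c) / (1 + ∑ c, D c / B c) := by
  have hsum : ∑ c, q c = (1 / 2) * ∑ c, A c / B c - (∑ c, D c / B c) * ∑ c, q c := by
    conv_lhs => rw [sum_congr rfl fun c _ ↦ hq.eq_bestResponse (hB c).ne']
    rw [sum_sub_distrib, ← sum_div, ← sum_mul]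
    ring
  have hden : 0 < 1 + ∑ c, D c / B c :=
    add_pos_of_pos_of_nonneg one_pos (sum_nonneg fun c _ ↦ div_nonneg (hD c) (hB c).le)
  rw [eq_div_iff hden.ne']
  linarith

theorem pollution_total_at_nash {C : ℕ} (hC : 1 ≤ C)
    (A B D : Fin C → ℝ) (hB : ∀ c, 0 < B c) (hD : ∀ c, 0 ≤ D c)
    (q : Fin C → ℝ) (hq : IsNash A B D q) :
    (∑ c, q c) = ((1 / 2) * ∑ c, A c / B c) / (1 + ∑ c, D c / B c) :=
  pollution_total_at_nash_general A B D hB hD q hq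
end

section
/- The pollution game with B_c > 0 and D_c ≥ 0 for all c has exactly one Nash equilibrium. -/
/-!
Country `c`'s utility, as a function of its own choice `x` alone, is the concave quadratic
`(A c - 2 D c T) x - (B c + D c) x ^ 2 + const`, where `T` is the others' total; so `q` is a
Nash equilibrium iff every first-order condition `A c = 2 B c q c + 2 D c ∑ q` holds.
Solving these for `q c` expresses it as `A c / (2 B c) - (D c / B c) S` with `S = ∑ q`;
summing gives `S (1 + ∑ D / B) = ∑ A / (2 B)`, which determines `S` because `D / B ≥ 0`,
and with it the whole profile.
-/

open Finset

lemma forall_mul_sub_mul_sq_le_iff {k a y : ℝ} (hk : 0 < k) :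
    (∀ x, a * x - k * x ^ 2 ≤ a * y - k * y ^ 2) ↔ a = 2 * k * y := by
  constructor
  · intro h
    set t := (a - 2 * k * y) / (2 * k) with ht_def
    have ha : a = 2 * k * y + 2 * k * t := by
      rw [ht_def]
      field_simp
      ring
    -- moving from `y` to `y + t` gains exactly `k t ^ 2`
    have hgain : k * t ^ 2 ≤ 0 := by
      have := h (y + t)
      rw [ha] at this
      linarith
    have ht : t = 0 := pow_eq_zero_iff two_ne_zero |>.mp
      (le_antisymm (nonpos_of_mul_nonpos_right hgain hk) (sq_nonneg t))
    rw [ha, ht]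
    ring
  · rintro rfl x
    nlinarith [mul_nonneg hk.le (sq_nonneg (x - y))]

lemma pollutionUtility_update {C : ℕ} (A B D : Fin C → ℝ) (c : Fin C) (q : Fin C → ℝ) (x : ℝ) :
    pollutionUtility A B D c (Function.update q c x) =
      (A c - 2 * D c * ∑ j ∈ univ.erase c, q j) * x - (B c + D c) * x ^ 2
        - D c * (∑ j ∈ univ.erase c, q j) ^ 2 := by
  have hsum : ∑ j, Function.update q c x j = x + ∑ j ∈ univ.erase c, q j := by
    rw [sum_update_of_mem (mem_univ c), erase_eq]
  simp only [pollutionUtility, Function.update_self, hsum]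
  ring

lemma isNash_iff {C : ℕ} {A B D : Fin C → ℝ} (hBD : ∀ c, 0 < B c + D c) {q : Fin C → ℝ} :
    IsNash A B D q ↔ ∀ c, A c = 2 * B c * q c + 2 * D c * ∑ j, q j := by
  refine forall_congr' fun c => ?_
  have hutil := pollutionUtility_update A B D c q (q c)
  rw [Function.update_eq_self] at hutil
  simp only [hutil, pollutionUtility_update, sub_le_sub_iff_right,
    forall_mul_sub_mul_sq_le_iff (hBD c), ← add_sum_erase univ q (mem_univ c)]
  constructor <;> intro h <;> linarith

lemma first_order_condition_iff {B D : ℝ} (hB : B ≠ 0) {A x S : ℝ} :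
    A = 2 * B * x + 2 * D * S ↔ x = A / (2 * B) - D / B * S := by
  constructor <;> intro h <;> rw [h] <;> field_simp <;> ring

section LinearAggregate

variable {ι : Type*} [Fintype ι] {a r q : ι → ℝ}

lemma sum_eq_div_of_forall_eq_sub_mul_sum (hr : 1 + ∑ i, r i ≠ 0)
    (hq : ∀ i, q i = a i - r i * ∑ j, q j) :
    ∑ i, q i = (∑ i, a i) / (1 + ∑ i, r i) := by
  have hsum : ∑ i, q i = ∑ i, a i - (∑ i, r i) * ∑ j, q j := by
    conv_lhs => rw [sum_congr rfl fun i _ => hq i]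
    rw [sum_sub_distrib, sum_mul]
  rw [eq_div_iff hr]
  linarith

lemma forall_eq_sub_mul_sum_iff (hr : 1 + ∑ i, r i ≠ 0) :
    (∀ i, q i = a i - r i * ∑ j, q j) ↔
      q = fun i => a i - r i * ((∑ j, a j) / (1 + ∑ j, r j)) := by
  constructor
  · intro hq
    funext i
    rw [hq i, sum_eq_div_of_forall_eq_sub_mul_sum hr hq]
  · rintro rfl i
    rw [sum_sub_distrib, ← sum_mul]
    field_simp
    ring

end LinearAggregate

theorem pollution_unique_nash {C : ℕ}
    (A B D : Fin C → ℝ) (hB : ∀ c, 0 < B c) (hD : ∀ c, 0 ≤ D c) :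
    ∃! q : Fin C → ℝ, IsNash A B D q := by
  have hBD : ∀ c, 0 < B c + D c := fun c => add_pos_of_pos_of_nonneg (hB c) (hD c)
  have hR : 1 + ∑ c, D c / B c ≠ 0 :=
    (add_pos_of_pos_of_nonneg one_pos (sum_nonneg fun c _ => div_nonneg (hD c) (hB c).le)).ne'
  simp_rw [isNash_iff hBD, first_order_condition_iff (hB _).ne',
    forall_eq_sub_mul_sum_iff (a := fun c => A c / (2 * B c)) hR]
  exact existsUnique_eq
end
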